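/- A point p ∈ X is a persistent shadowable point for φ if and only if for every ε > 0 there exists δ > 0 such that every δ-pseudo orbit f: G → X of any continuous action ψ with d_S(φ,ψ) < δ satisfying f(e) ∈ B[p,δ] (the closed δ-ball around p) can be ε-shadowed by a ψ-orbit. -/

import Mathlib

open MeasureTheory

def ContGroupAction (G : Type*) [Group G] (X : Type*) [MetricSpace X] (φ : G → X → X) : Prop :=
  (∀ g : G, Continuous (φ g)) ∧ (∀ g h : G, ∀ x : X, φ (g * h) x = φ g (φ h x)) ∧
    (∀ x : X, φ (1 : G) x = x)

def IsPseudoOrbit {G : Type*} [Group G] {X : Type*} [MetricSpace X]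
    (S : Set G) (ψ : G → X → X) (δ : ℝ) (f : G → X) : Prop :=
  ∀ s ∈ S, ∀ g : G, dist (f (s * g)) (ψ s (f g)) < δ

def CloseActions {G : Type*} [Group G] {X : Type*} [MetricSpace X]
    (S : Set G) (φ ψ : G → X → X) (δ : ℝ) : Prop :=
  ∀ s ∈ S, ∀ x : X, dist (φ s x) (ψ s x) < δ

def PersistentShadowing {G : Type*} [Group G] {X : Type*} [MetricSpace X]
    (S : Set G) (φ : G → X → X) : Prop :=
  ∀ ε > (0:ℝ), ∃ δ > (0:ℝ), ∀ ψ : G → X → X, ContGroupAction G X ψ → CloseActions S φ ψ δ →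
    ∀ f : G → X, IsPseudoOrbit S ψ δ f → ∃ p : X, ∀ g : G, dist (f g) (ψ g p) < ε

def Shadowing {G : Type*} [Group G] {X : Type*} [MetricSpace X]
    (S : Set G) (φ : G → X → X) : Prop :=
  ∀ ε > (0:ℝ), ∃ δ > (0:ℝ), ∀ f : G → X, IsPseudoOrbit S φ δ f →
    ∃ p : X, ∀ g : G, dist (f g) (φ g p) < ε

def PShSet {G : Type*} [Group G] {X : Type*} [MetricSpace X]
    (S : Set G) (φ : G → X → X) (δ ε : ℝ) : Set X :=
  {x | ∀ ψ : G → X → X, ContGroupAction G X ψ → CloseActions S φ ψ δ →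
    ∀ f : G → X, IsPseudoOrbit S ψ δ f → f 1 = x →
      ∃ p : X, ∀ g : G, dist (f g) (ψ g p) < ε}

def PShPoint {G : Type*} [Group G] {X : Type*} [MetricSpace X]
    (S : Set G) (φ : G → X → X) (x : X) : Prop :=
  ∀ ε > (0:ℝ), ∃ δ > (0:ℝ), x ∈ PShSet S φ δ ε

def ShPoint {G : Type*} [Group G] {X : Type*} [MetricSpace X]
    (S : Set G) (φ : G → X → X) (x : X) : Prop :=
  ∀ ε > (0:ℝ), ∃ δ > (0:ℝ), ∀ f : G → X, IsPseudoOrbit S φ δ f → f 1 = x →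
    ∃ p : X, ∀ g : G, dist (f g) (φ g p) < ε

def UPersisBetaPoint {G : Type*} [Group G] {X : Type*} [MetricSpace X]
    (S : Set G) (φ : G → X → X) (x : X) : Prop :=
  ∀ ε > (0:ℝ), ∃ δ > (0:ℝ), ∀ ψ : G → X → X, ContGroupAction G X ψ → CloseActions S φ ψ δ →
    ∀ x' : X, dist x' x < δ → ∃ y : X, ∀ g : G, dist (φ g x') (ψ g y) < ε

def BetaPersistent {G : Type*} [Group G] {X : Type*} [MetricSpace X]
    (S : Set G) (φ : G → X → X) : Prop :=
  ∀ ε > (0:ℝ), ∃ δ > (0:ℝ), ∀ ψ : G → X → X, ContGroupAction G X ψ → CloseActions S φ ψ δ →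
    ∀ x : X, ∃ y : X, ∀ g : G, dist (φ g x) (ψ g y) < ε

def CompatiblePSh {G : Type*} [Group G] {X : Type*} [MetricSpace X] [MeasurableSpace X]
    (S : Set G) (φ : G → X → X) (μ : Measure X) : Prop :=
  ∀ ε > (0:ℝ), ∃ δ > (0:ℝ), ∀ A : Set X, MeasurableSet A → 0 < μ A →
    (A ∩ PShSet S φ δ ε).Nonempty

def MeasSupp {X : Type*} [MetricSpace X] [MeasurableSpace X] (μ : Measure X) : Set X :=
  {x | ∀ U : Set X, IsOpen U → x ∈ U → 0 < μ U}

/-! Replace the initial point of a pseudo-orbit `f` of `ψ` with `f 1 ∈ B[p, δ]` by `p`. Since the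
maps `φ s`, `s ∈ S`, are uniformly continuous and `ψ` is `δ`-close to `φ` on `S`, the modified map
is still a (slightly coarser) pseudo-orbit of `ψ`, now starting at `p`, so it is shadowed by a
`ψ`-orbit; that orbit shadows `f` as well, up to the extra error `δ` at `1`. -/

theorem Set.Finite.exists_uniform_modulus {X : Type*} [MetricSpace X] [CompactSpace X]
    {ι : Type*} {S : Set ι} (hS : S.Finite) {φ : ι → X → X} (hφ : ∀ s, Continuous (φ s))
    {η : ℝ} (hη : 0 < η) :
    ∃ ρ > (0 : ℝ), ∀ s ∈ S, ∀ a b : X, dist a b < ρ → dist (φ s a) (φ s b) < η := by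
  have hunif : ∀ s ∈ S, ∀ᶠ q in uniformity X, dist (φ s q.1) (φ s q.2) < η := fun s _ =>
    CompactSpace.uniformContinuous_of_continuous (hφ s) (Metric.dist_mem_uniformity hη)
  obtain ⟨ρ, hρ, h⟩ := Metric.mem_uniformity_dist.mp (hS.eventually_all.mpr hunif)
  exact ⟨ρ, hρ, fun s hs a b hab => h (a := a) (b := b) hab s hs⟩

section PseudoOrbit

variable {G : Type*} [Group G] {X : Type*} [MetricSpace X] {S : Set G} {φ ψ : G → X → X}

theorem IsPseudoOrbit.mono {δ δ' : ℝ} {f : G → X} (hf : IsPseudoOrbit S ψ δ f) (h : δ ≤ δ') :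
    IsPseudoOrbit S ψ δ' f := fun s hs g => (hf s hs g).trans_le h

theorem CloseActions.mono {δ δ' : ℝ} (hc : CloseActions S φ ψ δ) (h : δ ≤ δ') :
    CloseActions S φ ψ δ' := fun s hs x => (hc s hs x).trans_le h

theorem CloseActions.dist_lt_of_dist_lt {δ ρ η : ℝ} (hc : CloseActions S φ ψ δ)
    (hφ : ∀ s ∈ S, ∀ a b : X, dist a b < ρ → dist (φ s a) (φ s b) < η)
    {s : G} (hs : s ∈ S) {a b : X} (hab : dist a b < ρ) :
    dist (ψ s a) (ψ s b) < δ + η + δ :=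
  calc dist (ψ s a) (ψ s b) ≤ dist (ψ s a) (φ s a) + dist (φ s a) (φ s b) + dist (φ s b) (ψ s b) :=
        dist_triangle4 _ _ _ _
    _ < δ + η + δ := by
        gcongr
        · exact dist_comm (φ s a) (ψ s a) ▸ hc s hs a
        · exact hφ s hs a b hab
        · exact hc s hs b

theorem IsPseudoOrbit.of_dist_le {δ δ' ρ η r : ℝ} {f f' : G → X} (hf : IsPseudoOrbit S ψ δ f)
    (hc : CloseActions S φ ψ δ')
    (hφ : ∀ s ∈ S, ∀ a b : X, dist a b < ρ → dist (φ s a) (φ s b) < η)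
    (hff' : ∀ g, dist (f' g) (f g) ≤ r) (hr : r < ρ) :
    IsPseudoOrbit S ψ (r + δ + (δ' + η + δ')) f' := fun s hs g =>
  calc dist (f' (s * g)) (ψ s (f' g))
      ≤ dist (f' (s * g)) (f (s * g)) + dist (f (s * g)) (ψ s (f g))
          + dist (ψ s (f g)) (ψ s (f' g)) := dist_triangle4 _ _ _ _
    _ < r + δ + (δ' + η + δ') := by
        have hψ := hc.dist_lt_of_dist_lt hφ hs (dist_comm (f' g) (f g) ▸ (hff' g).trans_lt hr)
        linarith [hff' (s * g), hf s hs g]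

end PseudoOrbit

theorem stmt11_general {G : Type*} [Group G] {X : Type*} [MetricSpace X] [CompactSpace X]
    (S : Set G) (hSfin : S.Finite)
    (φ : G → X → X) (hφ : ContGroupAction G X φ) (p : X) :
    PShPoint S φ p ↔
      ∀ ε > (0:ℝ), ∃ δ > (0:ℝ), ∀ ψ : G → X → X, ContGroupAction G X ψ →
        CloseActions S φ ψ δ → ∀ f : G → X, IsPseudoOrbit S ψ δ f →
          dist (f 1) p ≤ δ → ∃ z : X, ∀ g : G, dist (f g) (ψ g z) < ε := by
  classical
  constructor
  · intro hp ε hε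
    obtain ⟨δ₀, hδ₀, hsh⟩ := hp (ε / 2) (by positivity)
    obtain ⟨ρ, hρ, hmod⟩ := hSfin.exists_uniform_modulus hφ.1 (show 0 < δ₀ / 5 by positivity)
    refine ⟨min (δ₀ / 5) (min (ρ / 2) (ε / 2)), by positivity, fun ψ hψ hc f hf hf1 => ?_⟩
    set δ := min (δ₀ / 5) (min (ρ / 2) (ε / 2))
    have hδδ₀ : δ ≤ δ₀ / 5 := min_le_left _ _
    have hδρ : δ ≤ ρ / 2 := (min_le_right _ _).trans (min_le_left _ _)
    have hδε : δ ≤ ε / 2 := (min_le_right _ _).trans (min_le_right _ _)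
    set f' := Function.update f 1 p
    have hff' : ∀ g, dist (f' g) (f g) ≤ δ := fun g => by
      rcases eq_or_ne g 1 with rfl | hg
      · simpa [f', dist_comm] using hf1
      · simpa [f', hg] using (show (0 : ℝ) ≤ δ by positivity)
    have hf' : IsPseudoOrbit S ψ δ₀ f' :=
      (hf.of_dist_le hc hmod hff' (by linarith)).mono (by linarith)
    obtain ⟨z, hz⟩ := hsh ψ hψ (hc.mono (by linarith)) f' hf' (by simp [f'])
    refine ⟨z, fun g => ?_⟩
    calc dist (f g) (ψ g z) ≤ dist (f' g) (f g) + dist (f' g) (ψ g z) := dist_triangle_left _ _ _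
      _ < ε := by linarith [hff' g, hz g]
  · intro h ε hε
    obtain ⟨δ, hδ, H⟩ := h ε hε
    exact ⟨δ, hδ, fun ψ hψ hc f hf hf1 => H ψ hψ hc f hf (by simpa [hf1] using hδ.le)⟩

theorem stmt11 {G : Type*} [Group G] {X : Type*} [MetricSpace X] [CompactSpace X]
    (S : Set G) (hSfin : S.Finite) (hSsym : ∀ s ∈ S, s⁻¹ ∈ S)
    (hSgen : Subgroup.closure S = ⊤)
    (φ : G → X → X) (hφ : ContGroupAction G X φ) (p : X) :
    PShPoint S φ p ↔
      ∀ ε > (0:ℝ), ∃ δ > (0:ℝ), ∀ ψ : G → X → X, ContGroupAction G X ψ →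
        CloseActions S φ ψ δ → ∀ f : G → X, IsPseudoOrbit S ψ δ f →
          dist (f 1) p ≤ δ → ∃ z : X, ∀ g : G, dist (f g) (ψ g z) < ε :=
  stmt11_general S hSfin φ hφ p
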